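/- arXiv:2605.02456 — 5 statements merged into one kernel-verified Lean document; each statement's English description precedes it below -/
import Mathlib

section
/- Let X = PPᵀ where P ∈ {0,1}^{n×k}. Then for every subset S ⊆ [n], ∑_{i∈S} X_{ii} ≤ ∑_{i,j∈S, i<j} X_{ij} + k. -/
/-!
Column by column: if column `c` of `P` has `m` ones among the rows of `S`, its contribution to
`∑_{i ∈ S} X_{ii}` is `m` and to the strict upper pair sum is `m (m - 1) / 2`, and
`m ≤ m (m - 1) / 2 + 1` for every natural `m`. Summing over the `k` columns gives the bound.
-/

open Finset

theorem Finset.sq_sum_eq_sum_sq_add_two_mul_sum_lt {ι R : Type*} [LinearOrder ι] [CommSemiring R]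
    (S : Finset ι) (f : ι → R) :
    (∑ i ∈ S, f i) ^ 2 =
      ∑ i ∈ S, f i ^ 2 + 2 * ∑ i ∈ S, ∑ j ∈ S.filter (fun j => i < j), f i * f j := by
  have hswap : ∑ i ∈ S, ∑ j ∈ S.filter (fun j => j < i), f i * f j =
      ∑ i ∈ S, ∑ j ∈ S.filter (fun j => i < j), f i * f j := by
    simp only [sum_filter]
    rw [sum_comm]
    simp only [mul_comm]
  have hrow : ∀ i ∈ S, ∑ j ∈ S, f i * f j = f i ^ 2 +
      ∑ j ∈ S.filter (fun j => i < j), f i * f j + ∑ j ∈ S.filter (fun j => j < i), f i * f j := by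
    intro i hi
    rw [← sum_filter_add_sum_filter_not S (fun j => i < j), add_comm (f i ^ 2), add_assoc]
    congr 1
    have : S.filter (fun j => ¬ i < j) = insert i (S.filter (fun j => j < i)) := by
      ext j
      simp only [mem_filter, mem_insert, not_lt]
      constructor
      · rintro ⟨hj, hle⟩
        exact hle.eq_or_lt.imp id (fun h => ⟨hj, h⟩)
      · rintro (rfl | ⟨hj, h⟩)
        exacts [⟨hi, le_rfl⟩, ⟨hj, h.le⟩]
    rw [this, sum_insert (by simp), sq, add_comm]
  rw [sq, sum_mul_sum, sum_congr rfl hrow, sum_add_distrib, sum_add_distrib, hswap]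
  ring

theorem Finset.sum_le_sum_lt_mul_add_one {ι : Type*} [LinearOrder ι] (S : Finset ι) (f : ι → ℕ)
    (hf : ∀ i, f i = 0 ∨ f i = 1) :
    ∑ i ∈ S, f i ≤ ∑ i ∈ S, ∑ j ∈ S.filter (fun j => i < j), f i * f j + 1 := by
  have hsq : ∑ i ∈ S, f i ^ 2 = ∑ i ∈ S, f i :=
    sum_congr rfl fun i _ => by rcases hf i with h | h <;> simp [h]
  have h := S.sq_sum_eq_sum_sq_add_two_mul_sum_lt f
  rw [hsq] at h
  -- `2 p + m = m ^ 2` forces `m ≤ p + 1`, since `(m - 1) (m - 2) ≥ 0` on integers.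
  rcases Nat.lt_or_ge (∑ i ∈ S, f i) 2 with hm | hm <;> nlinarith

theorem stmt_3 {n k : ℕ} (P : Fin n → Fin k → ℕ)
    (hP : ∀ i c, P i c = 0 ∨ P i c = 1)
    (X : Fin n → Fin n → ℕ)
    (hX : ∀ i j, X i j = ∑ c, P i c * P j c)
    (S : Finset (Fin n)) :
    ∑ i ∈ S, X i i ≤ (∑ i ∈ S, ∑ j ∈ S.filter (fun j => i < j), X i j) + k := by
  have hdiag : ∀ i, X i i = ∑ c, P i c := fun i => by
    rw [hX]
    exact sum_congr rfl fun c _ => by rcases hP i c with h | h <;> simp [h]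
  calc ∑ i ∈ S, X i i = ∑ c, ∑ i ∈ S, P i c := by simp only [hdiag]; exact sum_comm
    _ ≤ ∑ c : Fin k, (∑ i ∈ S, ∑ j ∈ S.filter (fun j => i < j), P i c * P j c + 1) :=
      sum_le_sum fun c _ => S.sum_le_sum_lt_mul_add_one (P · c) (hP · c)
    _ = (∑ i ∈ S, ∑ j ∈ S.filter (fun j => i < j), X i j) + k := by
      simp only [hX, sum_add_distrib, sum_const, card_univ, Fintype.card_fin, smul_eq_mul, mul_one]
      rw [sum_comm]
      exact congrArg (· + k) (sum_congr rfl fun i _ => sum_comm)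
end

section
/- Let X = PPᵀ where P ∈ {0,1}^{n×k}. Then for all disjoint subsets S, S' ⊆ [n], ∑_{i∈S}∑_{j∈S'} X_{ij} ≤ ∑_{i∈S'} X_{ii} + ∑_{i,j∈S, i<j} X_{ij} + ∑_{i,j∈S', i<j} X_{ij}. -/
/-!
Summing over the columns of `P` reduces the inequality to a single 0/1 vector `p`. With
`a = ∑_{i ∈ S} pᵢ` and `b = ∑_{i ∈ S'} pᵢ`, idempotence of the entries turns the pair sums over
`S` and `S'` into `a(a-1)/2` and `b(b-1)/2`, so the claim becomes `2ab ≤ 2b + a(a-1) + b(b-1)`,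
i.e. `(a - b)(a - b - 1) ≥ 0`, which holds because `a - b` is an integer.
-/

open Finset

theorem Finset.sum_mul_self_eq_sum_mul_self_add_two_mul_sum_lt {ι R : Type*} [LinearOrder ι]
    [CommSemiring R] (s : Finset ι) (f : ι → R) :
    (∑ i ∈ s, f i) * (∑ i ∈ s, f i) =
      ∑ i ∈ s, f i * f i + 2 * ∑ i ∈ s, ∑ j ∈ s with i < j, f i * f j := by
  have trichotomy : ∀ i j, f i * f j = (if i < j then f i * f j else 0) +
      (if i = j then f i * f j else 0) + (if j < i then f j * f i else 0) := by
    intro i j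
    rcases lt_trichotomy i j with h | rfl | h
    · simp [h, h.ne, h.not_gt]
    · simp
    · simp [h, h.ne', h.not_gt, mul_comm]
  have diag : ∑ i ∈ s, ∑ j ∈ s, (if i = j then f i * f j else 0) = ∑ i ∈ s, f i * f i :=
    sum_congr rfl fun i hi => by rw [sum_ite_eq, if_pos hi]
  have swap : ∑ i ∈ s, ∑ j ∈ s, (if j < i then f j * f i else 0) =
      ∑ i ∈ s, ∑ j ∈ s with i < j, f i * f j := by
    rw [sum_comm]; simp only [sum_filter]
  rw [sum_mul_sum, sum_congr rfl fun i _ => sum_congr rfl fun j _ => trichotomy i j]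
  simp only [sum_add_distrib]
  rw [diag, swap]
  simp only [← sum_filter]
  ring

theorem Nat.two_mul_mul_add_le (a b : ℕ) : 2 * (a * b) + a ≤ a * a + b * b + b := by
  rcases le_or_gt a b with h | h <;> nlinarith

theorem sum_sum_mul_le_of_mul_self_eq_self {ι : Type*} [LinearOrder ι] (p : ι → ℕ)
    (hp : ∀ i, p i * p i = p i) (S S' : Finset ι) :
    ∑ i ∈ S, ∑ j ∈ S', p i * p j ≤
      ∑ i ∈ S', p i * p i + ∑ i ∈ S, ∑ j ∈ S with i < j, p i * p j +
        ∑ i ∈ S', ∑ j ∈ S' with i < j, p i * p j := by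
  have hS := sum_mul_self_eq_sum_mul_self_add_two_mul_sum_lt S p
  have hS' := sum_mul_self_eq_sum_mul_self_add_two_mul_sum_lt S' p
  simp only [hp] at hS hS' ⊢
  rw [← sum_mul_sum]
  linarith [Nat.two_mul_mul_add_le (∑ i ∈ S, p i) (∑ i ∈ S', p i)]

theorem stmt_4_general {n k : ℕ} (P : Fin n → Fin k → ℕ)
    (hP : ∀ i c, P i c = 0 ∨ P i c = 1)
    (X : Fin n → Fin n → ℕ)
    (hX : ∀ i j, X i j = ∑ c, P i c * P j c)
    (S S' : Finset (Fin n)) :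
    ∑ i ∈ S, ∑ j ∈ S', X i j ≤
      (∑ i ∈ S', X i i) + (∑ i ∈ S, ∑ j ∈ S.filter (fun j => i < j), X i j) +
        (∑ i ∈ S', ∑ j ∈ S'.filter (fun j => i < j), X i j) := by
  simp only [hX, sum_comm (t := (univ : Finset (Fin k)))]
  rw [← sum_add_distrib, ← sum_add_distrib]
  gcongr with c
  refine sum_sum_mul_le_of_mul_self_eq_self (P · c) (fun i => ?_) S S'
  rcases hP i c with h | h <;> simp [h]

theorem stmt_4 {n k : ℕ} (P : Fin n → Fin k → ℕ)
    (hP : ∀ i c, P i c = 0 ∨ P i c = 1)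
    (X : Fin n → Fin n → ℕ)
    (hX : ∀ i j, X i j = ∑ c, P i c * P j c)
    (S S' : Finset (Fin n)) (hdisj : Disjoint S S') :
    ∑ i ∈ S, ∑ j ∈ S', X i j ≤
      (∑ i ∈ S', X i i) + (∑ i ∈ S, ∑ j ∈ S.filter (fun j => i < j), X i j) +
        (∑ i ∈ S', ∑ j ∈ S'.filter (fun j => i < j), X i j) :=
  stmt_4_general P hP X hX S S'
end

section
/- Let X be a real symmetric n×n matrix such that the bordered matrix [[k, diag(X)ᵀ],[diag(X), X]] is positive semidefinite, X ≥ 0 entrywise, diag(X) ≤ 1 entrywise, and X_{ij} = 0 whenever i,j lie in a given clique Q of a graph G and i ≠ j. Then ∑_{i∈Q} X_{ii} ≤ min{k, |Q|}. -/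
/-!
Testing the positive semidefinite bordered matrix against the vector `(-1, 𝟙_Q)` gives
`k - 2 ∑_{i ∈ Q} X i i + ∑_{i, j ∈ Q} X i j ≥ 0`; since `X` vanishes off the diagonal on `Q`,
the double sum is `∑_{i ∈ Q} X i i`, whence `∑_{i ∈ Q} X i i ≤ k`. The bound by `|Q|` is
just `X i i ≤ 1`.
-/

/-- The bordered matrix `[[k, diag(X)ᵀ],[diag(X), X]]`. -/
def border {n : ℕ} (k : ℝ) (X : Matrix (Fin n) (Fin n) ℝ) :
    Matrix (Unit ⊕ Fin n) (Unit ⊕ Fin n) ℝ :=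
  Matrix.fromBlocks (Matrix.of fun _ _ => k) (Matrix.of fun _ i => X i i)
    (Matrix.of fun i _ => X i i) X

open Matrix

theorem dotProduct_border_mulVec_sumElim {n : ℕ} (k : ℝ) (X : Matrix (Fin n) (Fin n) ℝ)
    (c : ℝ) (x : Fin n → ℝ) :
    star (Sum.elim (fun _ => c) x) ⬝ᵥ border k X *ᵥ Sum.elim (fun _ => c) x
      = c ^ 2 * k + 2 * c * ∑ i, X i i * x i + x ⬝ᵥ X *ᵥ x := by
  simp only [border, star_trivial, dotProduct, mulVec, Fintype.sum_sum_type,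
    fromBlocks_apply₁₁, fromBlocks_apply₁₂, fromBlocks_apply₂₁, fromBlocks_apply₂₂,
    of_apply, Sum.elim_inl, Sum.elim_inr, Fintype.sum_unique, mul_add, Finset.sum_add_distrib]
  have hcross : ∑ i, x i * (X i i * c) = c * ∑ i, X i i * x i := by
    rw [Finset.mul_sum]
    exact Finset.sum_congr rfl fun i _ => by ring
  rw [hcross]
  ring

theorem dotProduct_mulVec_indicator {n : ℕ} (X : Matrix (Fin n) (Fin n) ℝ)
    (Q : Finset (Fin n)) :
    (fun i => if i ∈ Q then (1 : ℝ) else 0) ⬝ᵥ X *ᵥ (fun i => if i ∈ Q then 1 else 0)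
      = ∑ i ∈ Q, ∑ j ∈ Q, X i j := by
  simp only [dotProduct, mulVec, ite_mul, one_mul, zero_mul, mul_ite, mul_one, mul_zero,
    Finset.sum_ite_mem, Finset.univ_inter]

theorem sum_diag_le_of_posSemidef_border {n : ℕ} {k : ℝ} {X : Matrix (Fin n) (Fin n) ℝ}
    (hpsd : (border k X).PosSemidef) {Q : Finset (Fin n)}
    (hzero : ∀ i ∈ Q, ∀ j ∈ Q, i ≠ j → X i j = 0) :
    ∑ i ∈ Q, X i i ≤ k := by
  have hrow : ∀ i ∈ Q, ∑ j ∈ Q, X i j = X i i := fun i hi =>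
    Finset.sum_eq_single_of_mem i hi fun j hj hji => hzero i hi j hj hji.symm
  have h := hpsd.dotProduct_mulVec_nonneg
    (Sum.elim (fun _ => -1) fun i => if i ∈ Q then 1 else 0)
  rw [dotProduct_border_mulVec_sumElim, dotProduct_mulVec_indicator,
    Finset.sum_congr rfl hrow] at h
  simp only [mul_ite, mul_one, mul_zero, Finset.sum_ite_mem, Finset.univ_inter] at h
  linarith

theorem stmt_6_general {n : ℕ} (k : ℝ)
    (X : Matrix (Fin n) (Fin n) ℝ)
    (hpsd : (border k X).PosSemidef)
    (hdiag : ∀ i, X i i ≤ 1)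
    (Q : Finset (Fin n))
    (hzero : ∀ i ∈ Q, ∀ j ∈ Q, i ≠ j → X i j = 0) :
    ∑ i ∈ Q, X i i ≤ min k (Q.card : ℝ) := by
  refine le_min (sum_diag_le_of_posSemidef_border hpsd hzero) ?_
  simpa using Finset.sum_le_card_nsmul Q (fun i => X i i) 1 fun i _ => hdiag i

theorem stmt_6 {n : ℕ} (G : SimpleGraph (Fin n)) (k : ℝ) (hk : 1 ≤ k)
    (X : Matrix (Fin n) (Fin n) ℝ) (hsymm : X.IsSymm)
    (hpsd : (border k X).PosSemidef)
    (hnonneg : ∀ i j, 0 ≤ X i j) (hdiag : ∀ i, X i i ≤ 1)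
    (Q : Finset (Fin n)) (hQ : G.IsClique ↑Q)
    (hzero : ∀ i ∈ Q, ∀ j ∈ Q, i ≠ j → X i j = 0) :
    ∑ i ∈ Q, X i i ≤ min k (Q.card : ℝ) :=
  stmt_6_general k X hpsd hdiag Q hzero
end

section
/- Let X be a symmetric matrix, let Q, Q' ⊆ [n] be disjoint, and let h ∈ Q'. If ∑_{i∈Q} X_{ii} + ∑_{j∈Q'} X_{jj} ≤ ∑_{i∈Q}∑_{j∈Q'} X_{ij} + k and ∑_{i∈Q} X_{ih} ≤ X_{hh}, then ∑_{i∈Q} X_{ii} + ∑_{j∈Q'\{h}} X_{jj} ≤ ∑_{i∈Q}∑_{j∈Q'\{h}} X_{ij} + k. -/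
theorem stmt_8_general {n : ℕ} (X : Matrix (Fin n) (Fin n) ℝ)
    (Q Q' : Finset (Fin n)) (h : Fin n) (hh : h ∈ Q')
    (k : ℝ)
    (h1 : ∑ i ∈ Q, X i i + ∑ j ∈ Q', X j j ≤ (∑ i ∈ Q, ∑ j ∈ Q', X i j) + k)
    (h2 : ∑ i ∈ Q, X i h ≤ X h h) :
    ∑ i ∈ Q, X i i + ∑ j ∈ Q'.erase h, X j j ≤
      (∑ i ∈ Q, ∑ j ∈ Q'.erase h, X i j) + k := by
  simp_rw [← Finset.add_sum_erase Q' _ hh, Finset.sum_add_distrib] at h1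
  linarith

theorem stmt_8 {n : ℕ} (X : Matrix (Fin n) (Fin n) ℝ) (hsymm : X.IsSymm)
    (Q Q' : Finset (Fin n)) (hdisj : Disjoint Q Q') (h : Fin n) (hh : h ∈ Q')
    (k : ℝ)
    (h1 : ∑ i ∈ Q, X i i + ∑ j ∈ Q', X j j ≤ (∑ i ∈ Q, ∑ j ∈ Q', X i j) + k)
    (h2 : ∑ i ∈ Q, X i h ≤ X h h) :
    ∑ i ∈ Q, X i i + ∑ j ∈ Q'.erase h, X j j ≤
      (∑ i ∈ Q, ∑ j ∈ Q'.erase h, X i j) + k :=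
  stmt_8_general X Q Q' h hh k h1 h2
end

section
/- For n ≥ 1 and any p > 0, the set of binary vectors {0,1}^n equals the intersection of the box [0,1]^n with the ℓ_p-sphere {x ∈ ℝ^n : ∑_i |x_i − 1/2|^p = n/2^p}. -/
theorem stmt_10 {n : ℕ} (hn : 1 ≤ n) (p : ℝ) (hp : 0 < p) :
    {x : Fin n → ℝ | ∀ i, x i = 0 ∨ x i = 1} =
      {x : Fin n → ℝ | ∀ i, 0 ≤ x i ∧ x i ≤ 1} ∩
        {x : Fin n → ℝ | ∑ i, |x i - 1 / 2| ^ p = (n : ℝ) / 2 ^ p} := by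
  ext x
  simp only [Set.mem_setOf_eq, Set.mem_inter_iff]
  constructor
  · intro h
    constructor
    · intro i
      rcases h i with h | h <;> rw [h] <;> norm_num
    · have key : ∀ i : Fin n, |x i - 1 / 2| ^ p = (2 : ℝ) ^ (-p) := by
        intro i
        have : |x i - 1 / 2| = (2 : ℝ)⁻¹ := by
          rcases h i with h | h <;> rw [h] <;> norm_num
        rw [this, Real.inv_rpow (by norm_num), ← Real.rpow_neg (by norm_num)]
      rw [Finset.sum_congr rfl (fun i _ => key i), Finset.sum_const, Finset.card_univ,
        Fintype.card_fin, nsmul_eq_mul, Real.rpow_neg (by norm_num), div_eq_mul_inv]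
  · rintro ⟨hbox, hsum⟩
    have hle : ∀ i ∈ Finset.univ, |x i - 1 / 2| ^ p ≤ ((2 : ℝ)⁻¹) ^ p := by
      intro i _
      apply Real.rpow_le_rpow (abs_nonneg _) _ hp.le
      rw [abs_le]
      constructor <;> [linarith [(hbox i).1]; linarith [(hbox i).2]]
    have hsum' : ∑ i : Fin n, ((2 : ℝ)⁻¹) ^ p = (n : ℝ) / 2 ^ p := by
      rw [Finset.sum_const, Finset.card_univ, Fintype.card_fin, nsmul_eq_mul,
        Real.inv_rpow (by norm_num), div_eq_mul_inv]
    have heq : ∀ i ∈ Finset.univ, |x i - 1 / 2| ^ p = ((2 : ℝ)⁻¹) ^ p := by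
      apply (Finset.sum_eq_sum_iff_of_le hle).mp
      rw [hsum, hsum']
    intro i
    have h1 : |x i - 1 / 2| = (2 : ℝ)⁻¹ := by
      have := heq i (Finset.mem_univ i)
      exact (Real.rpow_left_inj (abs_nonneg _) (by norm_num) hp.ne').mp this
    rcases abs_eq (by norm_num : (0:ℝ) ≤ (2:ℝ)⁻¹) |>.mp h1 with h | h
    · right; linarith
    · left; linarith
end
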